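/- arXiv:1503.04169 — 3 statements merged into one kernel-verified Lean document; each statement's English description precedes it below -/
import Mathlib

section
/- For any join query Q with hypergraph H = (V, E), for any fractional edge cover x = (x_F)_{F∈E} of H, the number of tuples in the join ⋈_{F∈E} R_F is at most ∏_{F∈E} |R_F|^{x_F}. -/
/-!
The AGM bound is the special case, for indicator functions of the relations, of Finner's
generalized Hölder inequality `∑_t ∏_F f_F(t|_F) ^ x_F ≤ ∏_F (∑ f_F) ^ x_F`. That inequality is
proved by summing out one attribute `v` at a time: the factors whose edge avoids `v` do not see
the summation, and the others are merged by Hölder's inequality, with exponents of total weight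
`≥ 1` by the cover condition at `v`.
-/

open Finset Function MeasureTheory
open scoped ENNReal

theorem ENNReal.sum_rpow_le_rpow_sum {κ : Type*} (T : Finset κ) (b : κ → ℝ≥0∞) {p : ℝ}
    (hp : 1 ≤ p) : ∑ d ∈ T, b d ^ p ≤ (∑ d ∈ T, b d) ^ p := by
  classical
  induction T using Finset.induction_on with
  | empty => simp [ENNReal.zero_rpow_of_pos (zero_lt_one.trans_le hp)]
  | insert a T ha ih =>
    rw [sum_insert ha, sum_insert ha]
    calc b a ^ p + ∑ d ∈ T, b d ^ p ≤ b a ^ p + (∑ d ∈ T, b d) ^ p := by gcongr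
      _ ≤ _ := ENNReal.add_rpow_le_rpow_add _ _ hp

theorem ENNReal.sum_prod_rpow_le_prod_sum_rpow {ι κ : Type*} [Fintype κ] (s : Finset ι)
    (g : ι → κ → ℝ≥0∞) {p : ι → ℝ} (hp₀ : ∀ i ∈ s, 0 ≤ p i) (hp : ∑ i ∈ s, p i = 1) :
    ∑ d, ∏ i ∈ s, g i d ^ p i ≤ ∏ i ∈ s, (∑ d, g i d) ^ p i := by
  let _ : MeasurableSpace κ := ⊤
  simpa only [lintegral_count, tsum_fintype] using
    ENNReal.lintegral_prod_norm_pow_le (μ := Measure.count) (f := g) s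
      (fun i _ => measurable_from_top.aemeasurable) hp hp₀

/-- For sums (unlike integrals) Hölder survives exponents of total weight `≥ 1`, because `ℓ^p`
norms decrease in `p`. -/
theorem ENNReal.sum_prod_rpow_le_prod_sum_rpow_of_one_le_sum {ι κ : Type*} [Fintype κ]
    (s : Finset ι) (g : ι → κ → ℝ≥0∞) {p : ι → ℝ} (hp₀ : ∀ i ∈ s, 0 ≤ p i)
    (hp : 1 ≤ ∑ i ∈ s, p i) :
    ∑ d, ∏ i ∈ s, g i d ^ p i ≤ ∏ i ∈ s, (∑ d, g i d) ^ p i := by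
  set P := ∑ i ∈ s, p i
  have hP : 0 < P := zero_lt_one.trans_le hp
  have hq₀ : ∀ i ∈ s, 0 ≤ p i / P := fun i hi => div_nonneg (hp₀ i hi) hP.le
  have hq : ∑ i ∈ s, p i / P = 1 := by rw [← sum_div, div_self hP.ne']
  have hsplit : ∀ a : ι → ℝ≥0∞, ∏ i ∈ s, a i ^ p i = (∏ i ∈ s, a i ^ (p i / P)) ^ P := by
    intro a
    rw [← ENNReal.prod_rpow_of_nonneg hP.le]
    exact prod_congr rfl fun i _ => by rw [← ENNReal.rpow_mul, div_mul_cancel₀ _ hP.ne']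
  calc ∑ d, ∏ i ∈ s, g i d ^ p i = ∑ d, (∏ i ∈ s, g i d ^ (p i / P)) ^ P := by
        simp only [hsplit]
    _ ≤ (∑ d, ∏ i ∈ s, g i d ^ (p i / P)) ^ P := ENNReal.sum_rpow_le_rpow_sum _ _ hp
    _ ≤ (∏ i ∈ s, (∑ d, g i d) ^ (p i / P)) ^ P := by
        gcongr; exact ENNReal.sum_prod_rpow_le_prod_sum_rpow s g hq₀ hq
    _ = ∏ i ∈ s, (∑ d, g i d) ^ p i := (hsplit _).symm

section Marginal

variable {V D M : Type*} [Fintype V] [DecidableEq V] [Fintype D] [AddCommMonoid M]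

def agreeOff (W : Finset V) (t : V → D) : Finset (V → D) :=
  Fintype.piFinset fun u => if u ∈ W then univ else {t u}

theorem mem_agreeOff {W : Finset V} {t s : V → D} : s ∈ agreeOff W t ↔ ∀ u ∉ W, s u = t u := by
  simp only [agreeOff, Fintype.mem_piFinset]
  refine forall_congr' fun u => ?_
  split_ifs with hu <;> simp [hu]

/-- The counting-measure analogue of `MeasureTheory.lmarginal`. -/
def marginalSum (W : Finset V) (f : (V → D) → M) (t : V → D) : M :=
  ∑ s ∈ agreeOff W t, f s

theorem marginalSum_empty (f : (V → D) → M) (t : V → D) : marginalSum ∅ f t = f t := by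
  have : agreeOff ∅ t = {t} := by
    ext s; simp [mem_agreeOff, funext_iff]
  rw [marginalSum, this, sum_singleton]

theorem marginalSum_univ (f : (V → D) → M) (t : V → D) : marginalSum univ f t = ∑ s, f s := by
  have : agreeOff univ t = univ := by
    ext s; simp [mem_agreeOff]
  rw [marginalSum, this]

theorem marginalSum_insert {W : Finset V} {v : V} (hv : v ∉ W) (f : (V → D) → M) (t : V → D) :
    marginalSum (insert v W) f t = ∑ d, marginalSum W f (update t v d) := by
  classical
  rw [marginalSum, ← sum_fiberwise _ (· v)]
  refine sum_congr rfl fun d _ => sum_congr (ext fun s => ?_) fun _ _ => rfl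
  simp only [mem_filter, mem_agreeOff, mem_insert, not_or]
  constructor
  · rintro ⟨hs, rfl⟩ u hu
    by_cases huv : u = v
    · subst huv; simp
    · rw [update_of_ne huv]; exact hs u ⟨huv, hu⟩
  · intro hs
    refine ⟨fun u hu => ?_, by simpa using hs v hv⟩
    rw [hs u hu.2, update_of_ne hu.1]

theorem DependsOn.marginalSum {f : (V → D) → M} {F : Set V} (hf : DependsOn f F)
    (W : Finset V) : DependsOn (marginalSum W f) (F \ W) := by
  intro t t' htt'
  let glue (r : V → D) (s : V → D) : V → D := fun u => if u ∈ W then s u else r u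
  refine sum_nbij' (glue t') (glue t) (fun s _ => ?_) (fun s _ => ?_) (fun s hs => ?_)
    (fun s hs => ?_) (fun s hs => hf fun u hu => ?_)
  · simp +contextual [mem_agreeOff, glue]
  · simp +contextual [mem_agreeOff, glue]
  · funext u; by_cases hu : u ∈ W <;> simp [glue, hu, mem_agreeOff.1 hs u]
  · funext u; by_cases hu : u ∈ W <;> simp [glue, hu, mem_agreeOff.1 hs u]
  · by_cases huW : u ∈ W
    · simp [glue, huW]
    · simp only [glue, huW, if_false]
      exact (mem_agreeOff.1 hs u huW).trans (htt' u ⟨hu, huW⟩)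

/-- Finner's inequality. -/
theorem marginalSum_prod_rpow_le {ι : Type*} (s : Finset ι) (F : ι → Finset V)
    (f : ι → (V → D) → ℝ≥0∞) (hf : ∀ i ∈ s, DependsOn (f i) (F i)) {x : ι → ℝ}
    (hx : ∀ i ∈ s, 0 ≤ x i) (W : Finset V) (hW : ∀ v ∈ W, 1 ≤ ∑ i ∈ s with v ∈ F i, x i)
    (t : V → D) :
    marginalSum W (fun r => ∏ i ∈ s, f i r ^ x i) t ≤
      ∏ i ∈ s, marginalSum (W ∩ F i) (f i) t ^ x i := by
  induction W using Finset.induction_on generalizing t with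
  | empty => simp [marginalSum_empty]
  | insert v W hv ih =>
    have hW' : ∀ u ∈ W, 1 ≤ ∑ i ∈ s with u ∈ F i, x i := fun u hu => hW u (mem_insert_of_mem hu)
    set g : ι → D → ℝ≥0∞ := fun i d => marginalSum (W ∩ F i) (f i) (update t v d)
    have hconst : ∀ i ∈ s, v ∉ F i → ∀ d, g i d = marginalSum (insert v W ∩ F i) (f i) t := by
      intro i hi hvi d
      rw [insert_inter_of_notMem hvi]
      refine (hf i hi).marginalSum (W ∩ F i) fun u hu => ?_
      exact update_of_ne (by rintro rfl; exact hvi hu.1) _ _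
    have hsum : ∀ i, v ∈ F i → ∑ d, g i d = marginalSum (insert v W ∩ F i) (f i) t := by
      intro i hvi
      rw [insert_inter_of_mem hvi, marginalSum_insert fun h => hv (mem_inter.1 h).1]
    calc marginalSum (insert v W) (fun r => ∏ i ∈ s, f i r ^ x i) t
        = ∑ d, marginalSum W (fun r => ∏ i ∈ s, f i r ^ x i) (update t v d) :=
          marginalSum_insert hv _ t
      _ ≤ ∑ d, ∏ i ∈ s, g i d ^ x i := sum_le_sum fun d _ => ih hW' _
      _ = (∑ d, ∏ i ∈ s with v ∈ F i, g i d ^ x i) *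
            ∏ i ∈ s with v ∉ F i, marginalSum (insert v W ∩ F i) (f i) t ^ x i := by
          rw [sum_mul]
          refine sum_congr rfl fun d _ => ?_
          rw [← prod_filter_mul_prod_filter_not s (v ∈ F ·)]
          exact congrArg _ <| prod_congr rfl fun i hi => by
            rw [hconst i (mem_filter.1 hi).1 (mem_filter.1 hi).2]
      _ ≤ (∏ i ∈ s with v ∈ F i, (∑ d, g i d) ^ x i) *
            ∏ i ∈ s with v ∉ F i, marginalSum (insert v W ∩ F i) (f i) t ^ x i := by
          gcongr
          exact ENNReal.sum_prod_rpow_le_prod_sum_rpow_of_one_le_sum _ g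
            (fun i hi => hx i (mem_filter.1 hi).1) (hW v (mem_insert_self v W))
      _ = ∏ i ∈ s, marginalSum (insert v W ∩ F i) (f i) t ^ x i := by
          rw [← prod_filter_mul_prod_filter_not s (v ∈ F ·)]
          congr 1
          exact prod_congr rfl fun i hi => by rw [hsum i (mem_filter.1 hi).2]

end Marginal

section Join

variable {V D : Type*} [DecidableEq D]

def relIndicator (F : Finset V) (R : Finset (F → D)) (t : V → D) : ℝ≥0∞ :=
  if F.restrict t ∈ R then 1 else 0

theorem dependsOn_relIndicator (F : Finset V) (R : Finset (F → D)) :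
    DependsOn (relIndicator F R) F := fun t t' h => by
  simp only [relIndicator, F.dependsOn_restrict h]

variable [Fintype V] [DecidableEq V] [Fintype D]

def naturalJoin (E : Finset (Finset V)) (R : (F : Finset V) → Finset (F → D)) : Finset (V → D) :=
  {t | ∀ F ∈ E, F.restrict t ∈ R F}

theorem marginalSum_relIndicator_le (F : Finset V) (R : Finset (F → D)) (t : V → D) :
    marginalSum F (relIndicator F R) t ≤ #R := by
  simp only [marginalSum, relIndicator, sum_boole, Nat.cast_le]
  refine card_le_card_of_injOn F.restrict (fun s hs => (mem_filter.1 hs).2) fun s hs s' hs' h => ?_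
  have hs := mem_agreeOff.1 (mem_filter.1 hs).1
  have hs' := mem_agreeOff.1 (mem_filter.1 hs').1
  funext u
  by_cases hu : u ∈ F
  · exact congrFun h ⟨u, hu⟩
  · rw [hs u hu, hs' u hu]

theorem card_naturalJoin_le_sum_prod_rpow (E : Finset (Finset V))
    (R : (F : Finset V) → Finset (F → D)) (x : Finset V → ℝ) :
    (#(naturalJoin E R) : ℝ≥0∞) ≤ ∑ t, ∏ F ∈ E, relIndicator F (R F) t ^ x F := by
  rw [naturalJoin, card_eq_sum_ones, Nat.cast_sum, sum_filter]
  refine sum_le_sum fun t _ => ?_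
  split_ifs with ht
  · rw [Nat.cast_one, prod_eq_one fun F hF => by simp [relIndicator, ht F hF]]
  · exact zero_le

theorem card_naturalJoin_le (E : Finset (Finset V)) (R : (F : Finset V) → Finset (F → D))
    {x : Finset V → ℝ} (hx : ∀ F ∈ E, 0 ≤ x F)
    (hcover : ∀ v, 1 ≤ ∑ F ∈ E with v ∈ F, x F) :
    (#(naturalJoin E R) : ℝ≥0∞) ≤ ∏ F ∈ E, (#(R F) : ℝ≥0∞) ^ x F := by
  rcases isEmpty_or_nonempty (V → D) with hV | ⟨⟨t₀⟩⟩
  · simp [naturalJoin, univ_eq_empty]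
  calc (#(naturalJoin E R) : ℝ≥0∞)
      ≤ ∑ t, ∏ F ∈ E, relIndicator F (R F) t ^ x F := card_naturalJoin_le_sum_prod_rpow E R x
    _ = marginalSum univ (fun t => ∏ F ∈ E, relIndicator F (R F) t ^ x F) t₀ :=
        (marginalSum_univ _ t₀).symm
    _ ≤ ∏ F ∈ E, marginalSum (univ ∩ F) (relIndicator F (R F)) t₀ ^ x F :=
        marginalSum_prod_rpow_le E id _ (fun F _ => dependsOn_relIndicator F (R F)) hx univ
          (fun v _ => hcover v) t₀
    _ ≤ ∏ F ∈ E, (#(R F) : ℝ≥0∞) ^ x F := by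
        gcongr with F hF
        · exact hx F hF
        · rw [univ_inter]; exact marginalSum_relIndicator_le F (R F) t₀

end Join

/-- **AGM inequality**: for any join query with hypergraph `(V, E)` and relations
`R F` (sets of tuples over the attribute set `F`), and any fractional edge cover
`x`, the size of the join is at most `∏_{F ∈ E} |R F| ^ (x F)`. -/
theorem agm_inequality {V D : Type} [Fintype V] [DecidableEq V] [Fintype D]
    (E : Finset (Finset V))
    (R : (F : Finset V) → Finset ({v // v ∈ F} → D))
    (x : Finset V → ℝ)
    (hx_nonneg : ∀ F, 0 ≤ x F)
    (hx_cover : ∀ v : V, 1 ≤ ∑ F ∈ E.filter (fun F => v ∈ F), x F) :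
    (Nat.card {t : V → D // ∀ F ∈ E, (fun v : {v // v ∈ F} => t v.1) ∈ R F} : ℝ)
      ≤ ∏ F ∈ E, ((R F).card : ℝ) ^ (x F) := by
  classical
  have hcard : Nat.card {t : V → D // ∀ F ∈ E, (fun v : {v // v ∈ F} => t v.1) ∈ R F} =
      #(naturalJoin E R) := by
    rw [Nat.card_eq_fintype_card, Fintype.card_subtype]
    rfl
  calc (Nat.card {t : V → D // ∀ F ∈ E, (fun v : {v // v ∈ F} => t v.1) ∈ R F} : ℝ)
      = (#(naturalJoin E R) : ℝ≥0∞).toReal := by rw [hcard, ENNReal.toReal_natCast]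
    _ ≤ (∏ F ∈ E, (#(R F) : ℝ≥0∞) ^ x F).toReal :=
        ENNReal.toReal_mono (ENNReal.prod_ne_top fun F _ =>
          ENNReal.rpow_ne_top_of_nonneg (hx_nonneg F) (ENNReal.natCast_ne_top _))
          (card_naturalJoin_le E R (fun F _ => hx_nonneg F) hx_cover)
    _ = ∏ F ∈ E, ((R F).card : ℝ) ^ (x F) := by
        simp [ENNReal.toReal_prod, ← ENNReal.toReal_rpow]
end

section
/- For the triangle query Q = R(A,B) ⋈ S(B,C) ⋈ T(A,C) where |R|, |S|, |T| ≤ N, the output size is at most N^{3/2}. -/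
/-!
Split the output by the middle attribute `b`. The triples with middle value `b` inject both into
`R_b × S_b` (where `R_b`, `S_b` are the tuples of `R`, `S` with `B`-value `b`) and into `T`, so their
number is at most `min (|R_b| |S_b|) |T| ≤ √(|R_b| |S_b| |T|)`. Summing over `b` and applying
Cauchy–Schwarz to `∑ √|R_b| √|S_b|` gives `|Q| ≤ √(|R| |S| |T|)`, the AGM bound for the fractional
edge cover `(1/2, 1/2, 1/2)`.
-/

open Finset

theorem Real.le_sqrt_mul_sqrt_mul_sqrt {q f g M : ℝ} (hq : 0 ≤ q) (hf : 0 ≤ f)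
    (hqfg : q ≤ f * g) (hqM : q ≤ M) : q ≤ √f * √g * √M := by
  rw [← Real.sqrt_mul hf, ← Real.sqrt_mul (hq.trans hqfg)]
  apply Real.le_sqrt_of_sq_le
  rw [sq]
  exact mul_le_mul hqfg hqM hq (hq.trans hqfg)

theorem Finset.sum_le_sqrt_mul_sqrt_mul_sqrt {ι : Type*} (s : Finset ι) {q f g : ι → ℝ} {M : ℝ}
    (hq : ∀ i, 0 ≤ q i) (hf : ∀ i, 0 ≤ f i) (hg : ∀ i, 0 ≤ g i)
    (hqfg : ∀ i, q i ≤ f i * g i) (hqM : ∀ i, q i ≤ M) :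
    ∑ i ∈ s, q i ≤ √(∑ i ∈ s, f i) * √(∑ i ∈ s, g i) * √M :=
  calc ∑ i ∈ s, q i ≤ ∑ i ∈ s, √(f i) * √(g i) * √M :=
        sum_le_sum fun i _ => Real.le_sqrt_mul_sqrt_mul_sqrt (hq i) (hf i) (hqfg i) (hqM i)
    _ = (∑ i ∈ s, √(f i) * √(g i)) * √M := (sum_mul _ _ _).symm
    _ ≤ √(∑ i ∈ s, f i) * √(∑ i ∈ s, g i) * √M :=
        mul_le_mul_of_nonneg_right (Real.sum_sqrt_mul_sqrt_le s hf hg) (Real.sqrt_nonneg _)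

theorem Finset.sum_card_fiberwise_le_card {ι κ : Type*} [DecidableEq κ] (s : Finset ι)
    (t : Finset κ) (g : ι → κ) : ∑ j ∈ t, #{i ∈ s | g i = j} ≤ #s :=
  (sum_card_fiberwise_eq_card_filter s t g).trans_le (card_filter_le _ _)

section TriangleJoin

variable {α β γ : Type*} [DecidableEq α] [DecidableEq β] [DecidableEq γ]
  (R : Finset (α × β)) (S : Finset (β × γ)) (T : Finset (α × γ))

def triangleJoin : Finset (α × β × γ) :=
  {p ∈ R.image Prod.fst ×ˢ R.image Prod.snd ×ˢ S.image Prod.snd |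
    (p.1, p.2.1) ∈ R ∧ (p.2.1, p.2.2) ∈ S ∧ (p.1, p.2.2) ∈ T}

variable {R S T} in
@[simp]
theorem mem_triangleJoin {p : α × β × γ} :
    p ∈ triangleJoin R S T ↔ (p.1, p.2.1) ∈ R ∧ (p.2.1, p.2.2) ∈ S ∧ (p.1, p.2.2) ∈ T := by
  simp only [triangleJoin, mem_filter, mem_product, mem_image, and_iff_right_iff_imp]
  rintro ⟨hR, hS, -⟩
  exact ⟨⟨_, hR, rfl⟩, ⟨_, hR, rfl⟩, ⟨_, hS, rfl⟩⟩

theorem card_filter_triangleJoin_le_mul (b : β) :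
    #{p ∈ triangleJoin R S T | p.2.1 = b} ≤ #{x ∈ R | x.2 = b} * #{y ∈ S | y.1 = b} := by
  rw [← card_product]
  refine card_le_card_of_injOn (fun p => ((p.1, p.2.1), (p.2.1, p.2.2))) ?_ ?_
  · intro p hp
    simp only [mem_coe, mem_filter, mem_triangleJoin, mem_product] at hp ⊢
    exact ⟨⟨hp.1.1, hp.2⟩, hp.1.2.1, hp.2⟩
  · intro p _ p' _ h
    simp only [Prod.mk.injEq] at h
    exact Prod.ext h.1.1 (Prod.ext h.1.2 h.2.2)

theorem card_filter_triangleJoin_le_card (b : β) :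
    #{p ∈ triangleJoin R S T | p.2.1 = b} ≤ #T := by
  refine card_le_card_of_injOn (fun p => (p.1, p.2.2)) ?_ ?_
  · intro p hp
    simp only [mem_coe, mem_filter, mem_triangleJoin] at hp
    exact hp.1.2.2
  · intro p hp p' hp' h
    simp only [mem_coe, mem_filter] at hp hp'
    simp only [Prod.mk.injEq] at h
    exact Prod.ext h.1 (Prod.ext (hp.2.trans hp'.2.symm) h.2)

theorem card_triangleJoin_le :
    (#(triangleJoin R S T) : ℝ) ≤ √(#R : ℝ) * √(#S : ℝ) * √(#T : ℝ) := by
  set B := (triangleJoin R S T).image (·.2.1)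
  calc (#(triangleJoin R S T) : ℝ) = ∑ b ∈ B, (#{p ∈ triangleJoin R S T | p.2.1 = b} : ℝ) := by
        exact_mod_cast card_eq_sum_card_image (·.2.1) (triangleJoin R S T)
    _ ≤ √(∑ b ∈ B, (#{x ∈ R | x.2 = b} : ℝ)) * √(∑ b ∈ B, (#{y ∈ S | y.1 = b} : ℝ)) *
          √(#T : ℝ) :=
        sum_le_sqrt_mul_sqrt_mul_sqrt B (fun _ => by positivity) (fun _ => by positivity)
          (fun _ => by positivity) (fun b => mod_cast card_filter_triangleJoin_le_mul R S T b)
          (fun b => mod_cast card_filter_triangleJoin_le_card R S T b)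
    _ ≤ √(#R : ℝ) * √(#S : ℝ) * √(#T : ℝ) := by
        gcongr
        · exact_mod_cast sum_card_fiberwise_le_card R B Prod.snd
        · exact_mod_cast sum_card_fiberwise_le_card S B Prod.fst

end TriangleJoin

/-- For the triangle query `R(A,B) ⋈ S(B,C) ⋈ T(A,C)` with `|R|,|S|,|T| ≤ N`,
the output size is at most `N^(3/2)`. -/
theorem triangle_agm_bound {D : Type} (R S T : Finset (D × D)) (N : ℕ)
    (hR : R.card ≤ N) (hS : S.card ≤ N) (hT : T.card ≤ N) :
    ({p : D × D × D | (p.1, p.2.1) ∈ R ∧ (p.2.1, p.2.2) ∈ S ∧ (p.1, p.2.2) ∈ T}.ncard : ℝ)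
      ≤ (N : ℝ) ^ ((3 : ℝ) / 2) := by
  classical
  have hjoin : {p : D × D × D | (p.1, p.2.1) ∈ R ∧ (p.2.1, p.2.2) ∈ S ∧ (p.1, p.2.2) ∈ T} =
      ↑(triangleJoin R S T) := by
    ext p
    simp
  rw [hjoin, Set.ncard_coe_finset]
  calc (#(triangleJoin R S T) : ℝ) ≤ √(#R : ℝ) * √(#S : ℝ) * √(#T : ℝ) :=
        card_triangleJoin_le R S T
    _ ≤ √(N : ℝ) * √(N : ℝ) * √(N : ℝ) := by gcongr
    _ = (N : ℝ) ^ ((3 : ℝ) / 2) := by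
        rw [Real.mul_self_sqrt (Nat.cast_nonneg _), Real.sqrt_eq_rpow,
          ← Real.rpow_one_add' (Nat.cast_nonneg _) (by norm_num)]
        norm_num
end

section
/- The recursive Leapfrog Triejoin algorithm is correct: for any join query Q over attributes A_1, ..., A_n, LFTJ(Q) as defined returns exactly the set of output tuples of Q. -/
/-- A join query over attributes `Fin n`: a list of atoms, each with a set of
variables and a relation given as a set of full tuples (which, for a genuine
join query, depends only on the atom's variables). -/
abbrev JoinQuery (D : Type) (n : ℕ) := List (Set (Fin n) × Set (Fin n → D))

/-- The output of a join query: tuples whose projection to `vars R` lies in `R`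
for every atom `R` (with relations encoded as var-determined sets of full tuples,
this is just membership in every relation). -/
def joinOutput {D : Type} {n : ℕ} (Q : JoinQuery D n) : Set (Fin n → D) :=
  {t | ∀ a ∈ Q, t ∈ a.2}

/-- The residual query `Q_{a₁}` on attributes `A₂, …, A_n` obtained by fixing the
first attribute to `a₁`: each relation containing `A₁` is replaced by
`R[a₁] = π_{vars(R)∖{A₁}}(σ_{A₁ = a₁}(R))`, and the remaining relations are
unchanged (both cases are captured by substituting `a₁` for the first coordinate,
since relations depend only on their variables). -/
def residualQuery {D : Type} {n : ℕ} (Q : JoinQuery D (n + 1)) (a₁ : D) : JoinQuery D n :=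
  Q.map (fun p => ({i : Fin n | i.succ ∈ p.1}, {s : Fin n → D | Fin.cons a₁ s ∈ p.2}))

/-- The recursive Leapfrog Triejoin: compute
`L = ⋂_{R : A₁ ∈ vars R} π_{A₁}(R)`, and for each `a₁ ∈ L` recursively solve the
residual query, returning `⋃_{a₁ ∈ L} {a₁} × LFTJ(Q_{a₁})`. -/
def lftj {D : Type} : (n : ℕ) → JoinQuery D n → Set (Fin n → D)
  | 0, Q => {t | ∀ a ∈ Q, t ∈ a.2}
  | n + 1, Q =>
      {t | (t 0 ∈ {x : D | ∀ a ∈ Q, (0 : Fin (n + 1)) ∈ a.1 → ∃ u ∈ a.2, u 0 = x}) ∧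
           Fin.tail t ∈ lftj n (residualQuery Q (t 0))}

theorem mem_joinOutput_residualQuery {D : Type} {n : ℕ} (Q : JoinQuery D (n + 1)) (a₁ : D)
    (s : Fin n → D) : s ∈ joinOutput (residualQuery Q a₁) ↔ Fin.cons a₁ s ∈ joinOutput Q := by
  simp only [joinOutput, residualQuery, Set.mem_ofPred_eq, List.forall_mem_map]

theorem lftj_correct_general {D : Type} (n : ℕ) (Q : JoinQuery D n) :
    lftj n Q = joinOutput Q := by
  induction n with
  | zero => rfl
  | succ n ih =>
    ext t
    show (_ ∧ Fin.tail t ∈ lftj n _) ↔ _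
    rw [ih, mem_joinOutput_residualQuery, Fin.cons_self_tail]
    -- every output tuple witnesses its own first value in each relation containing `A₁`
    exact and_iff_right_of_imp fun ht a ha _ => ⟨t, ht a ha, rfl⟩

/-- **Correctness of Leapfrog Triejoin**: for any join query `Q` (relations
depend only on their variables), `LFTJ(Q)` returns exactly the output of `Q`. -/
theorem lftj_correct {D : Type} (n : ℕ) (Q : JoinQuery D n)
    (hvars : ∀ a ∈ Q, ∀ t t' : Fin n → D,
      (∀ i ∈ a.1, t i = t' i) → (t ∈ a.2 ↔ t' ∈ a.2)) :
    lftj n Q = joinOutput Q :=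
  lftj_correct_general n Q
end
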